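/- arXiv:2006.12169 — 2 statements merged into one kernel-verified Lean document; each statement's English description precedes it below -/
import Mathlib

section
/- Let φ : ℝ → ℝ be differentiable. Then φ is Gaussian–Poincaré normalized (i.e., E_{x∼N(0,1)}[φ(x)²] = E_{x∼N(0,1)}[φ'(x)²] = 1) and satisfies E_{x∼N(0,1)}[φ(x)] = 0 if and only if φ(x) = x for all x or φ(x) = −x for all x. -/
/-!
Let `γ` be the standard Gaussian density and `u` differentiable with `u 0 = 0`. Since `γ' = -x γ`,
the function `F x = γ x * u x ^ 2 / x` satisfies `F' = γ (u'² - u²) - γ (u' - u / x)²` for `x ≠ 0`.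
Integrating over `[a, b]` with `0 < a ≤ b`, the boundary term `F b` is nonnegative and `F a → 0` as
`a → 0` because `u x / x → u' 0`; hence `∫_{x > 0} γ (u' - u / x)² ≤ ∫_{x > 0} γ (u'² - u²)`,
and the same on `x < 0` by reflecting `u`. This gives the Gaussian Poincaré inequality
`E u² ≤ E u'²`, with equality only if `u' = u / x` almost everywhere, i.e. `u x / x` is constant,
equal to `u' 0`.

For a GPN `φ` with mean zero, the inequality applied to `φ - φ 0` reads `1 + φ(0)² ≤ 1`, so
`φ 0 = 0`; then `φ` is an equality case, `φ x = c x`, and `E φ² = 1` forces `c = ±1`.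
-/

open MeasureTheory ProbabilityTheory Real Filter Set Topology
open scoped NNReal

lemma hasDerivAt_gaussianPDFReal (μ : ℝ) (v : ℝ≥0) (x : ℝ) :
    HasDerivAt (gaussianPDFReal μ v) (-((x - μ) / v) * gaussianPDFReal μ v x) x := by
  have h := ((((hasDerivAt_id' x).sub_const μ).fun_pow 2).fun_neg.div_const
    (2 * (v : ℝ))).exp.const_mul (√(2 * π * v))⁻¹
  rw [gaussianPDFReal_def]
  refine h.congr_deriv ?_
  norm_num [mul_div_mul_left, neg_div]
  ring

lemma continuous_gaussianPDFReal (μ : ℝ) (v : ℝ≥0) : Continuous (gaussianPDFReal μ v) :=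
  continuous_iff_continuousAt.2 fun x => (hasDerivAt_gaussianPDFReal μ v x).continuousAt

lemma gaussianPDFReal_zero_neg (v : ℝ≥0) (x : ℝ) :
    gaussianPDFReal 0 v (-x) = gaussianPDFReal 0 v x := by
  simp [gaussianPDFReal_def]

lemma integrable_gaussianReal_iff {μ : ℝ} {v : ℝ≥0} (hv : v ≠ 0) {f : ℝ → ℝ} :
    Integrable f (gaussianReal μ v) ↔ Integrable (fun x => gaussianPDFReal μ v x * f x) := by
  rw [gaussianReal_of_var_ne_zero _ hv, integrable_withDensity_iff_integrable_smul'
    (measurable_gaussianPDF μ v) (ae_of_all _ fun _ => gaussianPDF_lt_top)]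
  simp [toReal_gaussianPDF]

lemma integral_sq_gaussianReal (μ : ℝ) (v : ℝ≥0) : ∫ x, x ^ 2 ∂gaussianReal μ v = μ ^ 2 + v := by
  have := variance_id_gaussianReal (μ := μ) (v := v)
  rw [variance_eq_sub (memLp_id_gaussianReal 2)] at this
  simp only [Pi.pow_apply, id_eq, integral_id_gaussianReal] at this
  linarith

lemma integral_sub_const_sq {Ω : Type*} [MeasurableSpace Ω] {μ : Measure Ω}
    [IsProbabilityMeasure μ] {f : Ω → ℝ} (hf : MemLp f 2 μ) (c : ℝ) :
    ∫ x, (f x - c) ^ 2 ∂μ = ∫ x, f x ^ 2 ∂μ - 2 * c * ∫ x, f x ∂μ + c ^ 2 := by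
  have hf2 := hf.integrable_sq
  have hint := ((hf.integrable one_le_two).const_mul 2).mul_const c
  have hdiff : Integrable (fun x => f x ^ 2 - 2 * f x * c) μ := hf2.sub hint
  simp_rw [sub_sq]
  rw [integral_add hdiff (integrable_const _), integral_sub hf2 hint, integral_mul_const,
    integral_const_mul]
  simp only [integral_const, probReal_univ, one_smul]
  ring

theorem eq_of_hasDerivAt_of_ae_eq_zero {f f' : ℝ → ℝ} {a b : ℝ}
    (hf : ∀ x ∈ uIcc a b, HasDerivAt f (f' x) x) (hf' : ∀ᵐ x, x ∈ uIoc a b → f' x = 0) :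
    f a = f b := by
  have hint : IntervalIntegrable f' volume a b := by
    refine intervalIntegrable_iff.2 ((integrable_zero ℝ ℝ _).congr ?_)
    exact (ae_restrict_iff' measurableSet_uIoc).2 (hf'.mono fun x hx hmem => (hx hmem).symm)
  have h := intervalIntegral.integral_eq_sub_of_hasDerivAt hf hint
  rw [intervalIntegral.integral_congr_ae hf', intervalIntegral.integral_zero] at h
  linarith

local notation "γ" => gaussianPDFReal 0 1

section HalfLine

variable {u : ℝ → ℝ}

lemma tendsto_div_nhdsNE_zero_deriv (hu : DifferentiableAt ℝ u 0) (hu0 : u 0 = 0) :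
    Tendsto (fun x => u x / x) (𝓝[≠] 0) (𝓝 (deriv u 0)) := by
  refine (hasDerivAt_iff_tendsto_slope.1 hu.hasDerivAt).congr fun x => ?_
  simp [slope_fun_def, hu0, div_eq_inv_mul]

lemma hasDerivAt_gaussianPDFReal_mul_sq_div {x : ℝ} (hu : DifferentiableAt ℝ u x) (hx : x ≠ 0) :
    HasDerivAt (fun y => γ y * u y ^ 2 / y)
      (γ x * (deriv u x ^ 2 - u x ^ 2) - γ x * (deriv u x - u x / x) ^ 2) x := by
  have h := ((hasDerivAt_gaussianPDFReal 0 1 x).mul (hu.hasDerivAt.pow 2)).div (hasDerivAt_id x) hx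
  refine h.congr_deriv ?_
  simp only [id, Pi.mul_apply, Pi.pow_apply, NNReal.coe_one, sub_zero, div_one, Nat.cast_ofNat]
  field_simp
  ring

lemma integrable_gaussianPDFReal_mul_deriv_sq_sub_sq (hu2 : Integrable fun x => γ x * u x ^ 2)
    (hu'2 : Integrable fun x => γ x * deriv u x ^ 2) :
    Integrable fun x => γ x * (deriv u x ^ 2 - u x ^ 2) := by
  simp_rw [mul_sub]
  exact hu'2.sub hu2

lemma intervalIntegrable_gaussianPDFReal_mul_sub_div_sq (hu : Differentiable ℝ u)
    (hu'2 : Integrable fun x => γ x * deriv u x ^ 2) {a b : ℝ} (ha : 0 < a) (hab : a ≤ b) :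
    IntervalIntegrable (fun x => γ x * (deriv u x - u x / x) ^ 2) volume a b := by
  have h0 : (0 : ℝ) ∉ uIcc a b := by
    rw [uIcc_of_le hab]
    exact fun h => ha.not_ge h.1
  have hcont : ContinuousOn (fun x => 2 * (γ x * (u x / x) ^ 2)) (uIcc a b) := by
    have : ContinuousOn (fun x => u x / x) (uIcc a b) :=
      hu.continuous.continuousOn.div continuousOn_id fun x hx h => h0 (h ▸ hx)
    have := continuous_gaussianPDFReal 0 1
    fun_prop
  refine ((hu'2.intervalIntegrable.const_mul 2).add hcont.intervalIntegrable).mono_fun' ?_ ?_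
  · exact ((measurable_gaussianPDFReal 0 1).mul (((measurable_deriv u).sub
      (hu.continuous.measurable.div measurable_id)).pow_const 2)).aestronglyMeasurable
  · refine ae_of_all _ fun x => ?_
    have := gaussianPDFReal_nonneg 0 1 x
    beta_reduce
    rw [norm_of_nonneg (by positivity)]
    nlinarith [sq_nonneg (deriv u x + u x / x)]

lemma integral_gaussianPDFReal_mul_sub_div_sq_le (hu : Differentiable ℝ u)
    (hu2 : Integrable fun x => γ x * u x ^ 2) (hu'2 : Integrable fun x => γ x * deriv u x ^ 2)
    {a b : ℝ} (ha : 0 < a) (hab : a ≤ b) :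
    ∫ x in a..b, γ x * (deriv u x - u x / x) ^ 2 ≤
      (∫ x in a..b, γ x * (deriv u x ^ 2 - u x ^ 2)) + γ a * u a ^ 2 / a := by
  have hq := intervalIntegrable_gaussianPDFReal_mul_sub_div_sq hu hu'2 ha hab
  have hg := (integrable_gaussianPDFReal_mul_deriv_sq_sub_sq hu2 hu'2).intervalIntegrable
    (a := a) (b := b)
  have hFTC := intervalIntegral.integral_eq_sub_of_hasDerivAt (fun x hx =>
    hasDerivAt_gaussianPDFReal_mul_sq_div (hu x) (ha.trans_le (uIcc_of_le hab ▸ hx).1).ne')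
    (hg.sub hq)
  rw [intervalIntegral.integral_sub hg hq] at hFTC
  have hb : 0 ≤ γ b * u b ^ 2 / b :=
    div_nonneg (mul_nonneg (gaussianPDFReal_nonneg 0 1 b) (sq_nonneg _)) (ha.le.trans hab)
  linarith

lemma aecover_Ioc_one_div_add_one : AECover (volume.restrict (Ioi (0 : ℝ))) atTop
    fun n : ℕ => Ioc (1 / (n + 1 : ℝ)) (n + 1) :=
  (aecover_Ioi_of_Ioi tendsto_one_div_add_atTop_nhds_zero_nat).inter
    (aecover_Iic (tendsto_natCast_atTop_atTop.atTop_add tendsto_const_nhds))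

lemma tendsto_gaussianPDFReal_mul_sq_div (hu : DifferentiableAt ℝ u 0) (hu0 : u 0 = 0) :
    Tendsto (fun x => γ x * u x ^ 2 / x) (𝓝[≠] 0) (𝓝 0) := by
  have hcont := ((continuous_gaussianPDFReal 0 1).continuousAt.mul hu.continuousAt).tendsto
  have := (tendsto_div_nhdsNE_zero_deriv hu hu0).mul (hcont.mono_left nhdsWithin_le_nhds)
  simp only [Pi.mul_apply, hu0, mul_zero] at this
  exact this.congr fun x => by ring

theorem integrableOn_Ioi_and_setIntegral_le (hu : Differentiable ℝ u) (hu0 : u 0 = 0)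
    (hu2 : Integrable fun x => γ x * u x ^ 2) (hu'2 : Integrable fun x => γ x * deriv u x ^ 2) :
    IntegrableOn (fun x => γ x * (deriv u x - u x / x) ^ 2) (Ioi 0) ∧
      ∫ x in Ioi 0, γ x * (deriv u x - u x / x) ^ 2 ≤
        ∫ x in Ioi 0, γ x * (deriv u x ^ 2 - u x ^ 2) := by
  set a : ℕ → ℝ := fun n => 1 / (n + 1)
  set b : ℕ → ℝ := fun n => n + 1
  have ha_pos (n : ℕ) : 0 < a n := Nat.one_div_pos_of_nat
  have hab (n : ℕ) : a n ≤ b n := by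
    simp only [a, b]
    rw [div_le_iff₀ (by positivity)]
    nlinarith
  have ha : Tendsto a atTop (𝓝[≠] 0) :=
    tendsto_nhdsWithin_of_tendsto_nhds_of_eventually_within _
      tendsto_one_div_add_atTop_nhds_zero_nat (Eventually.of_forall fun n => (ha_pos n).ne')
  have hrestrict (n : ℕ) : (volume.restrict (Ioi 0)).restrict (Ioc (a n) (b n)) =
      volume.restrict (Ioc (a n) (b n)) :=
    Measure.restrict_restrict_of_subset fun x hx => (ha_pos n).trans hx.1
  have hRHS : Tendsto (fun n => (∫ x in Ioc (a n) (b n), γ x * (deriv u x ^ 2 - u x ^ 2)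
      ∂volume.restrict (Ioi 0)) + γ (a n) * u (a n) ^ 2 / a n) atTop
      (𝓝 (∫ x in Ioi 0, γ x * (deriv u x ^ 2 - u x ^ 2))) := by
    rw [← add_zero (∫ x in Ioi 0, _)]
    exact (aecover_Ioc_one_div_add_one.integral_tendsto_of_countably_generated
      (integrable_gaussianPDFReal_mul_deriv_sq_sub_sq hu2 hu'2).integrableOn).add
      ((tendsto_gaussianPDFReal_mul_sq_div (hu 0) hu0).comp ha)
  have hqn (n : ℕ) : IntegrableOn (fun x => γ x * (deriv u x - u x / x) ^ 2) (Ioc (a n) (b n))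
      (volume.restrict (Ioi 0)) := by
    rw [IntegrableOn, hrestrict]
    exact (intervalIntegrable_iff_integrableOn_Ioc_of_le (hab n)).1
      (intervalIntegrable_gaussianPDFReal_mul_sub_div_sq hu hu'2 (ha_pos n) (hab n))
  have hle (n : ℕ) : ∫ x in Ioc (a n) (b n), γ x * (deriv u x - u x / x) ^ 2
      ∂volume.restrict (Ioi 0) ≤ (∫ x in Ioc (a n) (b n), γ x * (deriv u x ^ 2 - u x ^ 2)
      ∂volume.restrict (Ioi 0)) + γ (a n) * u (a n) ^ 2 / a n := by
    simp only [hrestrict, ← intervalIntegral.integral_of_le (hab n)]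
    exact integral_gaussianPDFReal_mul_sub_div_sq_le hu hu2 hu'2 (ha_pos n) (hab n)
  have hq_nonneg : ∀ᵐ x ∂volume.restrict (Ioi 0), 0 ≤ γ x * (deriv u x - u x / x) ^ 2 :=
    ae_of_all _ fun x => mul_nonneg (gaussianPDFReal_nonneg 0 1 x) (sq_nonneg _)
  obtain ⟨I, hI⟩ := hRHS.isBoundedUnder_le
  have hq : IntegrableOn (fun x => γ x * (deriv u x - u x / x) ^ 2) (Ioi 0) :=
    aecover_Ioc_one_div_add_one.integrable_of_integral_bounded_of_nonneg_ae I hqn hq_nonneg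
      ((eventually_map.1 hI).mono fun n hn => (hle n).trans hn)
  exact ⟨hq, le_of_tendsto_of_tendsto'
    (aecover_Ioc_one_div_add_one.integral_tendsto_of_countably_generated hq) hRHS hle⟩

theorem setIntegral_Ioi_nonneg (hu : Differentiable ℝ u) (hu0 : u 0 = 0)
    (hu2 : Integrable fun x => γ x * u x ^ 2) (hu'2 : Integrable fun x => γ x * deriv u x ^ 2) :
    0 ≤ ∫ x in Ioi 0, γ x * (deriv u x ^ 2 - u x ^ 2) :=
  (setIntegral_nonneg measurableSet_Ioi fun x _ =>
    mul_nonneg (gaussianPDFReal_nonneg 0 1 x) (sq_nonneg _)).trans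
    (integrableOn_Ioi_and_setIntegral_le hu hu0 hu2 hu'2).2

theorem eq_deriv_zero_mul_of_ae_deriv_eq_div (hu : Differentiable ℝ u) (hu0 : u 0 = 0)
    (h : ∀ᵐ x ∂volume.restrict (Ioi 0), deriv u x = u x / x) {x : ℝ} (hx : 0 < x) :
    u x = deriv u 0 * x := by
  have hconst (y : ℝ) (hy : 0 < y) : u y / y = u x / x := by
    have hpos {z : ℝ} (hz : z ∈ uIcc y x) : 0 < z := (lt_min hy hx).trans_le hz.1
    refine eq_of_hasDerivAt_of_ae_eq_zero (f := fun z => u z / z)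
      (f' := fun z => (deriv u z - u z / z) / z) (fun z hz => ?_) ?_
    · refine ((hu z).hasDerivAt.div (hasDerivAt_id z) (hpos hz).ne').congr_deriv ?_
      field_simp [(hpos hz).ne']
      simp only [id]
      ring
    · filter_upwards [(ae_restrict_iff' measurableSet_Ioi).1 h] with z hz hmem
      rw [hz (hpos (uIoc_subset_uIcc hmem)), sub_self, zero_div]
  have hlim : Tendsto (fun y => u y / y) (𝓝[>] 0) (𝓝 (deriv u 0)) :=
    (tendsto_div_nhdsNE_zero_deriv (hu 0) hu0).mono_left
      (nhdsWithin_mono _ fun y hy => ne_of_gt hy)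
  have hconst_lim : Tendsto (fun y => u y / y) (𝓝[>] 0) (𝓝 (u x / x)) :=
    tendsto_const_nhds.congr' (eventually_nhdsWithin_of_forall fun y hy => (hconst y hy).symm)
  rw [← tendsto_nhds_unique hconst_lim hlim, div_mul_cancel₀ _ hx.ne']

theorem eq_deriv_zero_mul_of_setIntegral_Ioi_nonpos (hu : Differentiable ℝ u) (hu0 : u 0 = 0)
    (hu2 : Integrable fun x => γ x * u x ^ 2) (hu'2 : Integrable fun x => γ x * deriv u x ^ 2)
    (h : ∫ x in Ioi 0, γ x * (deriv u x ^ 2 - u x ^ 2) ≤ 0) {x : ℝ} (hx : 0 < x) :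
    u x = deriv u 0 * x := by
  obtain ⟨hq, hle⟩ := integrableOn_Ioi_and_setIntegral_le hu hu0 hu2 hu'2
  have hq_nonneg : 0 ≤ᵐ[volume.restrict (Ioi 0)] fun x => γ x * (deriv u x - u x / x) ^ 2 :=
    ae_of_all _ fun x => mul_nonneg (gaussianPDFReal_nonneg 0 1 x) (sq_nonneg _)
  have hq_zero := (setIntegral_eq_zero_iff_of_nonneg_ae hq_nonneg hq).1
    (le_antisymm (hle.trans h) (integral_nonneg_of_ae hq_nonneg))
  refine eq_deriv_zero_mul_of_ae_deriv_eq_div hu hu0 (hq_zero.mono fun y hy => ?_) hx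
  have := (mul_eq_zero.1 hy).resolve_left (gaussianPDFReal_pos 0 1 y one_ne_zero).ne'
  linarith [pow_eq_zero_iff two_ne_zero |>.1 this]

end HalfLine

section FullLine

variable {u : ℝ → ℝ}

lemma integrable_gaussianPDFReal_mul_comp_neg {f : ℝ → ℝ} (hf : Integrable fun x => γ x * f x) :
    Integrable fun x => γ x * f (-x) := by
  simpa only [gaussianPDFReal_zero_neg] using hf.comp_neg

lemma integrable_gaussianPDFReal_mul_deriv_comp_neg_sq
    (hu'2 : Integrable fun x => γ x * deriv u x ^ 2) :
    Integrable fun x => γ x * deriv (fun y => u (-y)) x ^ 2 := by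
  simpa only [deriv_comp_neg, neg_sq] using integrable_gaussianPDFReal_mul_comp_neg hu'2

lemma integral_deriv_sq_sub_integral_sq_gaussianReal (hu2 : Integrable fun x => γ x * u x ^ 2)
    (hu'2 : Integrable fun x => γ x * deriv u x ^ 2) :
    ∫ x, deriv u x ^ 2 ∂gaussianReal 0 1 - ∫ x, u x ^ 2 ∂gaussianReal 0 1 =
      (∫ x in Ioi 0, γ x * (deriv u x ^ 2 - u x ^ 2)) +
        ∫ x in Ioi 0, γ x * (deriv (fun y => u (-y)) x ^ 2 - u (-x) ^ 2) := by
  have hg := integrable_gaussianPDFReal_mul_deriv_sq_sub_sq hu2 hu'2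
  have hreflect : ∫ x in Ioi 0, γ x * (deriv (fun y => u (-y)) x ^ 2 - u (-x) ^ 2) =
      ∫ x in Iic 0, γ x * (deriv u x ^ 2 - u x ^ 2) := by
    simpa only [deriv_comp_neg, neg_sq, gaussianPDFReal_zero_neg, neg_zero] using
      integral_comp_neg_Ioi 0 fun x => γ x * (deriv u x ^ 2 - u x ^ 2)
  simp only [integral_gaussianReal_eq_integral_smul one_ne_zero, smul_eq_mul]
  rw [← integral_sub hu'2 hu2, hreflect, add_comm,
    intervalIntegral.integral_Iic_add_Ioi hg.integrableOn hg.integrableOn]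
  simp only [mul_sub]

theorem integral_sq_le_integral_deriv_sq_gaussianReal (hu : Differentiable ℝ u) (hu0 : u 0 = 0)
    (hu2 : Integrable (fun x => u x ^ 2) (gaussianReal 0 1))
    (hu'2 : Integrable (fun x => deriv u x ^ 2) (gaussianReal 0 1)) :
    ∫ x, u x ^ 2 ∂gaussianReal 0 1 ≤ ∫ x, deriv u x ^ 2 ∂gaussianReal 0 1 := by
  rw [integrable_gaussianReal_iff one_ne_zero] at hu2 hu'2
  rw [← sub_nonneg, integral_deriv_sq_sub_integral_sq_gaussianReal hu2 hu'2]
  exact add_nonneg (setIntegral_Ioi_nonneg hu hu0 hu2 hu'2)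
    (setIntegral_Ioi_nonneg (hu.comp differentiable_neg) (by simpa using hu0)
      (integrable_gaussianPDFReal_mul_comp_neg hu2)
      (integrable_gaussianPDFReal_mul_deriv_comp_neg_sq hu'2))

theorem eq_deriv_zero_mul_of_integral_deriv_sq_le_gaussianReal (hu : Differentiable ℝ u)
    (hu0 : u 0 = 0) (hu2 : Integrable (fun x => u x ^ 2) (gaussianReal 0 1))
    (hu'2 : Integrable (fun x => deriv u x ^ 2) (gaussianReal 0 1))
    (h : ∫ x, deriv u x ^ 2 ∂gaussianReal 0 1 ≤ ∫ x, u x ^ 2 ∂gaussianReal 0 1) (x : ℝ) :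
    u x = deriv u 0 * x := by
  rw [integrable_gaussianReal_iff one_ne_zero] at hu2 hu'2
  have hu_neg : Differentiable ℝ fun y => u (-y) := hu.comp differentiable_neg
  have hu0_neg : u (-0) = 0 := by simpa using hu0
  have hu2_neg := integrable_gaussianPDFReal_mul_comp_neg hu2
  have hu'2_neg := integrable_gaussianPDFReal_mul_deriv_comp_neg_sq hu'2
  have hpos := setIntegral_Ioi_nonneg hu hu0 hu2 hu'2
  have hneg := setIntegral_Ioi_nonneg hu_neg hu0_neg hu2_neg hu'2_neg
  have hsplit := integral_deriv_sq_sub_integral_sq_gaussianReal hu2 hu'2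
  rcases lt_trichotomy x 0 with hx | rfl | hx
  · simpa [deriv_comp_neg] using eq_deriv_zero_mul_of_setIntegral_Ioi_nonpos hu_neg hu0_neg
      hu2_neg hu'2_neg (by linarith) (neg_pos.2 hx)
  · simp [hu0]
  · exact eq_deriv_zero_mul_of_setIntegral_Ioi_nonpos hu hu0 hu2 hu'2 (by linarith) hx

end FullLine

/-- **Proposition 2.** A differentiable function `φ : ℝ → ℝ` is Gaussian–Poincaré
normalized (`E[φ(x)²] = E[φ'(x)²] = 1` under the standard Gaussian measure) and has zero
Gaussian mean (`E[φ(x)] = 0`) if and only if `φ = id` or `φ = -id`. -/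
theorem statement1 (φ : ℝ → ℝ) (hφ : Differentiable ℝ φ) :
    ((∫ x, φ x ^ 2 ∂(gaussianReal 0 1)) = 1 ∧
      (∫ x, deriv φ x ^ 2 ∂(gaussianReal 0 1)) = 1 ∧
      (∫ x, φ x ∂(gaussianReal 0 1)) = 0) ↔
    ((φ = fun x => x) ∨ (φ = fun x => -x)) := by
  constructor
  · rintro ⟨hφ2, hφ'2, hφ1⟩
    have hint2 := integrable_of_integral_eq_one hφ2
    have hint'2 := integrable_of_integral_eq_one hφ'2
    have hφ0 : φ 0 = 0 := by
      have hL2 := (memLp_two_iff_integrable_sq hφ.continuous.aestronglyMeasurable).2 hint2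
      have := integral_sq_le_integral_deriv_sq_gaussianReal (hφ.sub_const (φ 0)) (sub_self _)
        (hL2.sub (memLp_const (φ 0))).integrable_sq (by simpa only [deriv_sub_const] using hint'2)
      simp only [integral_sub_const_sq hL2, deriv_sub_const, hφ2, hφ'2, hφ1] at this
      nlinarith
    obtain ⟨c, rfl⟩ : ∃ c, φ = fun x => c * x :=
      ⟨_, funext (eq_deriv_zero_mul_of_integral_deriv_sq_le_gaussianReal hφ hφ0 hint2 hint'2
        (by rw [hφ2, hφ'2]))⟩
    have hc : c ^ 2 = 1 := by
      simpa [mul_pow, integral_const_mul, integral_sq_gaussianReal] using hφ2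
    rcases sq_eq_one_iff.1 hc with rfl | rfl <;> simp
  · rintro (rfl | rfl) <;>
      simp [integral_sq_gaussianReal, integral_id_gaussianReal, integral_neg (fun x : ℝ => x)]
end

section
/- Let φ : ℝ → ℝ be differentiable with φ' Lipschitz continuous and E_{x∼N(0,1)}[φ'(x)²] = 1, and fix M > 0. For each d, let z_1, ..., z_d be i.i.d. standard Gaussian random variables and let y = (y_1, ..., y_d) ∈ ℝ^d be a fixed vector with ‖y‖_∞ ≤ M. Then for every ε > 0, P{ (1/d) | Σ_{i=1}^d y_i² φ'(z_i)² − Σ_{i=1}^d y_i² | ≥ ε } → 0 as d → ∞. -/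
open MeasureTheory ProbabilityTheory Filter

/-!
Since `φ'` is Lipschitz it grows at most linearly, so `φ'²` has finite second moment under the
Gaussian measure. The sum `∑ yᵢ² φ'(zᵢ)²` of independent terms then has mean `∑ yᵢ²` and
variance `∑ yᵢ⁴ Var(φ'²) ≤ d M⁴ Var(φ'²)`, and Chebyshev's inequality at deviation `d ε`
bounds the probability by `M⁴ Var(φ'²) / (ε² d) → 0`.
-/

theorem LipschitzWith.comp_memLp_of_isFiniteMeasure {α E F : Type*} [MeasurableSpace α]
    {μ : Measure α} [IsFiniteMeasure μ] [NormedAddCommGroup E] [NormedAddCommGroup F]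
    {p : ENNReal} {K : NNReal} {f : α → E} {g : E → F} (hg : LipschitzWith K g)
    (hf : MemLp f p μ) : MemLp (g ∘ f) p μ := by
  have hg₀ : LipschitzWith K (fun x => g x - g 0) := by
    simpa using hg.sub (LipschitzWith.const (g 0))
  convert (hg₀.comp_memLp (by simp) hf).add (memLp_const (g 0)) using 1
  ext x
  simp

theorem MeasureTheory.MemLp.sq {α : Type*} [MeasurableSpace α] {μ : Measure α} {f : α → ℝ}
    (hf : MemLp f 4 μ) : MemLp (fun x => f x ^ 2) 2 μ := by
  refine (memLp_two_iff_integrable_sq (hf.1.pow 2)).2 <|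
    (hf.integrable_norm_pow (p := 4) (by norm_num)).congr (ae_of_all _ fun x => ?_)
  simp only [Pi.pow_apply, Real.norm_eq_abs]
  rw [← sq_abs (f x)]
  ring

section WeightedSum

variable {ι α : Type*} [Fintype ι] [MeasurableSpace α] {ν : Measure α} [IsProbabilityMeasure ν]

theorem integral_weighted_sum_pi {g : α → ℝ} (hg : Integrable g ν) (w : ι → ℝ) :
    ∫ z, ∑ i, w i * g (z i) ∂(Measure.pi fun _ : ι => ν) = (∑ i, w i) * ∫ x, g x ∂ν := by
  rw [integral_finsetSum _ fun i _ => (integrable_comp_eval hg).const_mul (w i), Finset.sum_mul]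
  refine Finset.sum_congr rfl fun i _ => ?_
  rw [integral_const_mul, integral_comp_eval hg.1]

theorem variance_weighted_sum_pi {g : α → ℝ} (hg : MemLp g 2 ν) (w : ι → ℝ) :
    Var[fun z => ∑ i, w i * g (z i); Measure.pi fun _ : ι => ν] = (∑ i, w i ^ 2) * Var[g; ν] := by
  have := variance_sum_pi (μ := fun _ : ι => ν) (X := fun i x => w i * g x)
    fun i => hg.const_mul (w i)
  rw [Finset.sum_mul]
  convert this using 2
  · ext z; simp
  · rw [variance_const_mul]

theorem meas_ge_le_weighted_sum_pi {g : α → ℝ} (hg : MemLp g 2 ν) (w : ι → ℝ) {c : ℝ}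
    (hc : 0 < c) :
    (Measure.pi fun _ : ι => ν) {z | c ≤ |∑ i, w i * g (z i) - (∑ i, w i) * ∫ x, g x ∂ν|} ≤
      ENNReal.ofReal ((∑ i, w i ^ 2) * Var[g; ν] / c ^ 2) := by
  have hS : MemLp (fun z : ι → α => ∑ i, w i * g (z i)) 2 (Measure.pi fun _ : ι => ν) :=
    memLp_finsetSum _ fun i _ =>
      (hg.comp_measurePreserving (measurePreserving_eval (fun _ : ι => ν) i)).const_mul (w i)
  have := meas_ge_le_variance_div_sq hS hc
  rwa [variance_weighted_sum_pi hg, integral_weighted_sum_pi (hg.integrable one_le_two)] at this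

theorem tendsto_meas_ge_weighted_average_pi {g : α → ℝ} (hg : MemLp g 2 ν)
    {w : ∀ d : ℕ, Fin d → ℝ} {B : ℝ} (hw : ∀ d i, |w d i| ≤ B) {ε : ℝ} (hε : 0 < ε) :
    Tendsto (fun d : ℕ => (Measure.pi fun _ : Fin d => ν)
      {z | ε ≤ (1 / (d : ℝ)) * |∑ i, w d i * g (z i) - (∑ i, w d i) * ∫ x, g x ∂ν|})
      atTop (nhds 0) := by
  have hbound : ∀ᶠ d : ℕ in atTop, (Measure.pi fun _ : Fin d => ν)
      {z | ε ≤ (1 / (d : ℝ)) * |∑ i, w d i * g (z i) - (∑ i, w d i) * ∫ x, g x ∂ν|} ≤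
        ENNReal.ofReal (B ^ 2 * Var[g; ν] / ε ^ 2 / d) := by
    filter_upwards [eventually_gt_atTop 0] with d hd
    have hd : (0 : ℝ) < d := Nat.cast_pos.mpr hd
    have hset : {z : Fin d → α | ε ≤ (1 / (d : ℝ)) *
        |∑ i, w d i * g (z i) - (∑ i, w d i) * ∫ x, g x ∂ν|} =
        {z | d * ε ≤ |∑ i, w d i * g (z i) - (∑ i, w d i) * ∫ x, g x ∂ν|} := by
      ext z
      rw [Set.mem_ofPred_eq, Set.mem_ofPred_eq, one_div, inv_mul_eq_div, le_div_iff₀ hd, mul_comm ε]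
    have hw2 : ∑ i, w d i ^ 2 ≤ d * B ^ 2 := by
      calc ∑ i, w d i ^ 2 ≤ ∑ _i : Fin d, B ^ 2 :=
            Finset.sum_le_sum fun i _ => sq_le_sq' (abs_le.1 (hw d i)).1 (abs_le.1 (hw d i)).2
        _ = d * B ^ 2 := by simp
    rw [hset]
    refine (meas_ge_le_weighted_sum_pi hg (w d) (mul_pos hd hε)).trans
      (ENNReal.ofReal_le_ofReal ?_)
    calc (∑ i, w d i ^ 2) * Var[g; ν] / (d * ε) ^ 2
        ≤ d * B ^ 2 * Var[g; ν] / (d * ε) ^ 2 := by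
          gcongr
          exact variance_nonneg g ν
      _ = B ^ 2 * Var[g; ν] / ε ^ 2 / d := by field_simp
  have hlim : Tendsto (fun d : ℕ => ENNReal.ofReal (B ^ 2 * Var[g; ν] / ε ^ 2 / d)) atTop
      (nhds 0) := by
    rw [← ENNReal.ofReal_zero]
    exact (ENNReal.continuous_ofReal.tendsto 0).comp
      (tendsto_const_div_atTop_nhds_zero_nat (B ^ 2 * Var[g; ν] / ε ^ 2))
  exact tendsto_of_tendsto_of_tendsto_of_le_of_le' tendsto_const_nhds hlim
    (Eventually.of_forall fun _ => zero_le) hbound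

end WeightedSum

theorem statement14_general (φ : ℝ → ℝ)
    (hLip : ∃ K, LipschitzWith K (deriv φ))
    (hGPN : (∫ x, deriv φ x ^ 2 ∂(gaussianReal 0 1)) = 1)
    (M : ℝ)
    (y : ∀ d : ℕ, Fin d → ℝ) (hy : ∀ d i, |y d i| ≤ M) :
    ∀ ε > 0, Tendsto
      (fun d => (Measure.pi fun _ : Fin d => gaussianReal 0 1)
        {z : Fin d → ℝ | ε ≤ (1 / (d : ℝ)) *
          |(∑ i, y d i ^ 2 * deriv φ (z i) ^ 2) - ∑ i, y d i ^ 2|})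
      atTop (nhds 0) := by
  intro ε hε
  obtain ⟨K, hK⟩ := hLip
  have hg : MemLp (fun x => deriv φ x ^ 2) 2 (gaussianReal 0 1) :=
    (hK.comp_memLp_of_isFiniteMeasure (memLp_id_gaussianReal 4)).sq
  have hw : ∀ d i, |y d i ^ 2| ≤ M ^ 2 := fun d i => by
    rw [abs_pow]
    exact pow_le_pow_left₀ (abs_nonneg _) (hy d i) 2
  simpa only [hGPN, mul_one] using tendsto_meas_ge_weighted_average_pi hg hw hε

/-- Weighted weak law for squares of Lipschitz images of Gaussians: let `φ : ℝ → ℝ` be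
differentiable with `φ'` Lipschitz and `E_{x∼N(0,1)}[φ'(x)²] = 1`, and fix `M > 0`.
For each `d`, let `z₁, ..., z_d` be i.i.d. standard Gaussians (encoded by the product
measure `⨂ᵢ N(0,1)` on `Fin d → ℝ`) and let `y d ∈ ℝ^d` be fixed with `‖y d‖_∞ ≤ M`.
Then for every `ε > 0`,
`P{ (1/d)|∑ᵢ yᵢ² φ'(zᵢ)² − ∑ᵢ yᵢ²| ≥ ε } → 0` as `d → ∞`. -/
theorem statement14 (φ : ℝ → ℝ) (hφ : Differentiable ℝ φ)
    (hLip : ∃ K, LipschitzWith K (deriv φ))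
    (hGPN : (∫ x, deriv φ x ^ 2 ∂(gaussianReal 0 1)) = 1)
    (M : ℝ) (hM : 0 < M)
    (y : ∀ d : ℕ, Fin d → ℝ) (hy : ∀ d i, |y d i| ≤ M) :
    ∀ ε > 0, Tendsto
      (fun d => (Measure.pi fun _ : Fin d => gaussianReal 0 1)
        {z : Fin d → ℝ | ε ≤ (1 / (d : ℝ)) *
          |(∑ i, y d i ^ 2 * deriv φ (z i) ^ 2) - ∑ i, y d i ^ 2|})
      atTop (nhds 0) :=
  statement14_general φ hLip hGPN M y hy
end
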